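/- Suppose a group G acts geometrically on a CAT(0) space X and let g ∈ G. If the fixed-point set F_g = {x ∈ X : gx = x} is unbounded, then the fixed-point set ℱ_g = {α ∈ ∂X : gα = α} on the boundary is nonempty. Consequently, if the centralizer Z_g is finite, then F_g is bounded. -/

import Mathlib

/-!
Points of the geodesic from `x₀` to a `g`-fixed point `y` are moved by `g` at most
`d(g x₀, x₀)`, by convexity of the CAT(0) metric along the geodesics `[y, x₀]` and
`[y, g x₀] = g [y, x₀]`. A geometric action on a geodesic space forces `X` to be proper: only
finitely many `γ` bring a compact `K` within distance `r` of itself, for small `r` by compactness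
and properness of the action, then for every `r` by cutting geodesics into short pieces. So the
geodesics from `x₀` to fixed points escaping to infinity converge along an ultrafilter to a ray
from `x₀` which `g` moves by a bounded amount, i.e. to a `g`-fixed point of `∂X`.

Conversely, if `g` fixes `h • c` with `c` in a compact set `K` whose translates cover `X`, then
`h⁻¹ g h` lies in the finite set of `γ` with `γ K ∩ K ≠ ∅`, and the `h` with a prescribed
conjugate form a single coset of `Z_g`. So finitely many translates of `K` cover `F_g`.
-/

open Metric Set Filter Pointwise

/-- A unit-speed geodesic segment from `x` to `y`, parametrized on `[0, dist x y]`. -/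
def IsGeodesicFromTo {X : Type*} [MetricSpace X] (f : ℝ → X) (x y : X) : Prop :=
  f 0 = x ∧ f (dist x y) = y ∧
    ∀ s ∈ Set.Icc (0 : ℝ) (dist x y), ∀ t ∈ Set.Icc (0 : ℝ) (dist x y),
      dist (f s) (f t) = |s - t|

/-- A geodesic metric space: any two points are joined by a geodesic segment. -/
def IsGeodesicSpace (X : Type*) [MetricSpace X] : Prop :=
  ∀ x y : X, ∃ f : ℝ → X, IsGeodesicFromTo f x y

/-- A CAT(0) space: a geodesic space all of whose geodesic triangles satisfy the CAT(0)
comparison inequality (stated here in its standard equivalent form: the comparison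
inequality for a point `z` and a point on a geodesic from `x` to `y`). -/
def IsCAT0Space (X : Type*) [MetricSpace X] : Prop :=
  IsGeodesicSpace X ∧
    ∀ (x y z : X) (f : ℝ → X), IsGeodesicFromTo f x y →
      ∀ t ∈ Set.Icc (0 : ℝ) 1,
        dist z (f (t * dist x y)) ^ 2 ≤
          (1 - t) * dist z x ^ 2 + t * dist z y ^ 2 - t * (1 - t) * dist x y ^ 2

/-- A subset `C` is (geodesically) convex: every geodesic segment between points of `C`
lies in `C`. -/
def GeodesicConvex {X : Type*} [MetricSpace X] (C : Set X) : Prop :=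
  ∀ x ∈ C, ∀ y ∈ C, ∀ f : ℝ → X, IsGeodesicFromTo f x y →
    ∀ t ∈ Set.Icc (0 : ℝ) (dist x y), f t ∈ C

/-- A geometric action: an action by isometries which is proper and cocompact. -/
structure IsGeometricAction (G X : Type*) [Group G] [MetricSpace X] [MulAction G X] : Prop where
  isometry : ∀ g : G, Isometry (fun x : X => g • x)
  proper : ∀ K : Set X, IsCompact K →
    {g : G | ((fun x : X => g • x) '' K ∩ K).Nonempty}.Finite
  cocompact : ∃ K : Set X, IsCompact K ∧ ⋃ g : G, (fun x : X => g • x) '' K = Set.univ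

/-- A unit-speed geodesic ray starting at `x0`. -/
def IsGeodesicRayFrom {X : Type*} [MetricSpace X] (x0 : X) (ξ : ℝ → X) : Prop :=
  ξ 0 = x0 ∧ ∀ s t : ℝ, 0 ≤ s → 0 ≤ t → dist (ξ s) (ξ t) = |s - t|

/-- The boundary of a proper CAT(0) space, modelled as the set of geodesic rays emanating
from the basepoint `x0`; the cone topology coincides with the topology of pointwise
convergence of rays (as a subspace of `ℝ → X` with the product topology). -/
abbrev Boundary (X : Type*) [MetricSpace X] (x0 : X) : Type _ :=
  {ξ : ℝ → X // IsGeodesicRayFrom x0 ξ}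

/-- Two maps `ℝ → X` are asymptotic if they are at bounded distance on `[0, ∞)`. -/
def AsymptoticMaps {X : Type*} [MetricSpace X] (f g : ℝ → X) : Prop :=
  ∃ C : ℝ, ∀ t : ℝ, 0 ≤ t → dist (f t) (g t) ≤ C

/-- The image `Im ξ` of a geodesic ray `ξ` (on `[0, ∞)`). -/
def rayImage {X : Type*} [MetricSpace X] {x0 : X} (ξ : Boundary X x0) : Set X :=
  ξ.1 '' Set.Ici (0 : ℝ)

/-- A sequence of points of `X` converges, in the cone topology on `X ∪ ∂X`, to the
boundary point `β`: the distances from the basepoint tend to infinity, and the geodesic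
segments from the basepoint to the points of the sequence converge pointwise to the ray
representing `β`. -/
def TendstoBoundary {X : Type*} [MetricSpace X] (x0 : X) (x : ℕ → X) (β : Boundary X x0) : Prop :=
  Tendsto (fun n => dist x0 (x n)) atTop atTop ∧
    ∀ f : ℕ → ℝ → X, (∀ n, IsGeodesicFromTo (f n) x0 (x n)) →
      ∀ t : ℝ, 0 ≤ t →
        Tendsto (fun n => f n (min t (dist x0 (x n)))) atTop (nhds (β.1 t))


open Topology

namespace IsGeodesicFromTo

variable {X : Type*} [MetricSpace X] {f : ℝ → X} {x y : X} {s : ℝ}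

lemma dist_left (hf : IsGeodesicFromTo f x y) (hs : s ∈ Icc 0 (dist x y)) : dist x (f s) = s := by
  rw [← hf.1, hf.2.2 0 ⟨le_rfl, dist_nonneg⟩ s hs, zero_sub, abs_neg, abs_of_nonneg hs.1]

lemma dist_right (hf : IsGeodesicFromTo f x y) (hs : s ∈ Icc 0 (dist x y)) :
    dist (f s) y = dist x y - s := by
  conv_lhs => rw [← hf.2.1]
  rw [hf.2.2 s hs _ ⟨dist_nonneg, le_rfl⟩, abs_sub_comm, abs_of_nonneg (sub_nonneg.2 hs.2)]

lemma symm (hf : IsGeodesicFromTo f x y) : IsGeodesicFromTo (fun s => f (dist x y - s)) y x := by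
  have hmem {s : ℝ} (hs : s ∈ Icc 0 (dist y x)) : dist x y - s ∈ Icc 0 (dist x y) := by
    rw [dist_comm] at hs
    constructor <;> linarith [hs.1, hs.2]
  refine ⟨by simpa using hf.2.1, by simpa [dist_comm] using hf.1, fun s hs t ht => ?_⟩
  rw [hf.2.2 _ (hmem hs) _ (hmem ht), abs_sub_comm]
  ring_nf

lemma isometry_comp {T : X → X} (hT : Isometry T) (hf : IsGeodesicFromTo f x y) :
    IsGeodesicFromTo (T ∘ f) (T x) (T y) := by
  simp only [IsGeodesicFromTo, hT.dist_eq, Function.comp_apply]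
  exact ⟨by rw [hf.1], by rw [hf.2.1], hf.2.2⟩

end IsGeodesicFromTo

namespace IsCAT0Space

variable {X : Type*} [MetricSpace X]

lemma dist_le_mul_of_geodesicFromTo (hX : IsCAT0Space X) {p x y : X} {α β : ℝ → X}
    (hα : IsGeodesicFromTo α p x) (hβ : IsGeodesicFromTo β p y) {t : ℝ} (ht : t ∈ Icc 0 1) :
    dist (α (t * dist p x)) (β (t * dist p y)) ≤ t * dist x y := by
  set m := α (t * dist p x)
  have hpm : dist p m = t * dist p x :=
    hα.dist_left ⟨by nlinarith [ht.1, dist_nonneg (x := p) (y := x)],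
      by nlinarith [ht.2, dist_nonneg (x := p) (y := x)]⟩
  have hym := hX.2 p x y α hα t ht
  have hmβ := hX.2 p y m β hβ t ht
  rw [dist_comm m p, hpm, dist_comm m y] at hmβ
  rw [dist_comm y p, dist_comm y x] at hym
  -- comparison in the triangle `p x y` for `m`, then in the triangle `p y m` for `β (t |py|)`
  have hsq : dist m (β (t * dist p y)) ^ 2 ≤ (t * dist x y) ^ 2 := by
    nlinarith [mul_le_mul_of_nonneg_left hym ht.1]
  exact (pow_le_pow_iff_left₀ dist_nonneg (mul_nonneg ht.1 dist_nonneg) two_ne_zero).1 hsq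

lemma dist_apply_le_of_isometry_of_fixed (hX : IsCAT0Space X) {T : X → X} (hT : Isometry T)
    {f : ℝ → X} {x y : X} (hf : IsGeodesicFromTo f x y) (hy : T y = y) {s : ℝ}
    (hs : s ∈ Icc 0 (dist x y)) : dist (T (f s)) (f s) ≤ dist (T x) x := by
  set d := dist x y with hd
  rcases (dist_nonneg : 0 ≤ d).eq_or_lt with hd0 | hdpos
  · rw [show s = 0 by linarith [hs.1, hs.2], hf.1]
  have ht : (d - s) / d ∈ Icc (0 : ℝ) 1 :=
    ⟨div_nonneg (by linarith [hs.2]) hdpos.le, (div_le_one hdpos).2 (by linarith [hs.1])⟩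
  have hβ := hf.symm.isometry_comp hT
  rw [hy] at hβ
  have hyTx : dist y (T x) = d := by rw [← hy, hT.dist_eq, dist_comm]
  have key := hX.dist_le_mul_of_geodesicFromTo hf.symm hβ ht
  rw [hyTx, dist_comm y x, ← hd, div_mul_cancel₀ _ hdpos.ne'] at key
  simp only [Function.comp_apply, sub_sub_cancel] at key
  calc dist (T (f s)) (f s) = dist (f s) (T (f s)) := dist_comm _ _
    _ ≤ (d - s) / d * dist x (T x) := key
    _ ≤ dist (T x) x := by
      rw [dist_comm x]; exact mul_le_of_le_one_left dist_nonneg ht.2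

end IsCAT0Space

lemma exists_boundary_tendsto_of_geodesicFromTo {X : Type*} [MetricSpace X] [ProperSpace X]
    {ι : Type*} (𝒰 : Ultrafilter ι) {x0 : X} {x : ι → X}
    (hx : Tendsto (fun i => dist x0 (x i)) 𝒰 atTop) {f : ι → ℝ → X}
    (hf : ∀ i, IsGeodesicFromTo (f i) x0 (x i)) :
    ∃ ξ : Boundary X x0, ∀ t, 0 ≤ t → Tendsto (fun i => f i t) 𝒰 (𝓝 (ξ.1 t)) := by
  have hmem {t : ℝ} (ht : 0 ≤ t) : ∀ᶠ i in 𝒰, t ∈ Icc 0 (dist x0 (x i)) :=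
    (hx.eventually_ge_atTop t).mono fun i hi => ⟨ht, hi⟩
  have hlim (t : ℝ) : ∃ p, 0 ≤ t → Tendsto (fun i => f i t) 𝒰 (𝓝 p) := by
    rcases lt_or_ge t 0 with ht | ht
    · exact ⟨x0, fun h => absurd h ht.not_ge⟩
    have hball : closedBall x0 t ∈ 𝒰.map fun i => f i t :=
      Ultrafilter.mem_map.2 <| (hmem ht).mono fun i hi =>
        mem_closedBall'.2 ((hf i).dist_left hi).le
    obtain ⟨p, -, hp⟩ := (isCompact_closedBall x0 t).ultrafilter_le_nhds' _ hball
    exact ⟨p, fun _ => hp⟩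
  choose ξ hξ using hlim
  refine ⟨⟨ξ, ?_, fun s t hs ht => ?_⟩, hξ⟩
  · exact tendsto_nhds_unique (hξ 0 le_rfl) (tendsto_const_nhds.congr fun i => (hf i).1.symm)
  · refine tendsto_nhds_unique ((hξ s hs).dist (hξ t ht)) (tendsto_const_nhds.congr' ?_)
    exact ((hmem hs).and (hmem ht)).mono fun i hi => ((hf i).2.2 s hi.1 t hi.2).symm

lemma Set.Finite.setOf_conj_mem {G : Type*} [Group G] {g : G}
    (hZ : {h : G | g * h = h * g}.Finite) {P : Set G} (hP : P.Finite) :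
    {h : G | h⁻¹ * g * h ∈ P}.Finite := by
  have hcover : {h : G | h⁻¹ * g * h ∈ P} ⊆ ⋃ γ ∈ P, {h | h⁻¹ * g * h = γ} :=
    fun h hh => mem_biUnion hh rfl
  refine (hP.biUnion fun γ _ => ?_).subset hcover
  rcases eq_empty_or_nonempty {h : G | h⁻¹ * g * h = γ} with he | ⟨h₀, hh₀⟩
  · exact he ▸ finite_empty
  refine (hZ.image (· * h₀)).subset fun h hh => ⟨h * h₀⁻¹, ?_, inv_mul_cancel_right h h₀⟩
  calc g * (h * h₀⁻¹) = h * (h⁻¹ * g * h) * h₀⁻¹ := by group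
    _ = h * (h₀⁻¹ * g * h₀) * h₀⁻¹ := by rw [hh, hh₀]
    _ = h * h₀⁻¹ * g := by group

def closeReturns (G : Type*) {X : Type*} [MetricSpace X] [SMul G X] (K : Set X) (r : ℝ) :
    Set G :=
  {γ | ∃ a ∈ K, ∃ b ∈ K, dist a (γ • b) ≤ r}

lemma closeReturns_mono {G X : Type*} [MetricSpace X] [SMul G X] {K : Set X} {r s : ℝ}
    (h : r ≤ s) : closeReturns G K r ⊆ closeReturns G K s :=
  fun _ ⟨a, ha, b, hb, hab⟩ => ⟨a, ha, b, hb, hab.trans h⟩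

section IsometricAction

variable {G X : Type*} [Group G] [MetricSpace X] [MulAction G X]

lemma closeReturns_add_subset (hiso : ∀ γ : G, Isometry fun x : X => γ • x)
    (hgeo : IsGeodesicSpace X) {K : Set X} (hcov : ⋃ γ : G, (fun x : X => γ • x) '' K = univ)
    {r s : ℝ} (hr : 0 ≤ r) (hs : 0 ≤ s) :
    closeReturns G K (r + s) ⊆ closeReturns G K r * closeReturns G K s := by
  rintro γ ⟨a, ha, b, hb, hab⟩
  obtain ⟨f, hf⟩ := hgeo a (γ • b)
  set d := dist a (γ • b)
  have hm : min r d ∈ Icc 0 d := ⟨le_min hr dist_nonneg, min_le_right _ _⟩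
  obtain ⟨h, c, hc, hhc : h • c = f (min r d)⟩ := iUnion_eq_univ_iff.1 hcov (f (min r d))
  refine ⟨h, ⟨a, ha, c, hc, ?_⟩, h⁻¹ * γ, ⟨c, hc, b, hb, ?_⟩, mul_inv_cancel_left h γ⟩
  · rw [hhc, hf.dist_left hm]
    exact min_le_left _ _
  · rw [← (hiso h).dist_eq, smul_smul, mul_inv_cancel_left, hhc, hf.dist_right hm]
    rcases min_cases r d with ⟨hmin, -⟩ | ⟨hmin, -⟩ <;> rw [hmin] <;> linarith

namespace IsGeometricAction

lemma exists_pos_finite_closeReturns (hGA : IsGeometricAction G X) {K : Set X}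
    (hK : IsCompact K) : ∃ ε > 0, (closeReturns G K ε).Finite := by
  by_contra! h
  have hγ (n : ℕ) : ∃ γ ∈ closeReturns G K (1 / (n + 1)),
      γ ∉ {γ : G | ((fun x => γ • x) '' K ∩ K).Nonempty} :=
    ((h _ Nat.one_div_pos_of_nat).sdiff (hGA.proper K hK)).nonempty
  choose γ hγ hγK using hγ
  choose a ha b hb hab using hγ
  obtain ⟨⟨a0, b0⟩, ⟨ha0, hb0⟩, φ, hφ, hlim⟩ :=
    (hK.prod hK).tendsto_subseq (x := fun n => (a n, b n)) fun n => ⟨ha n, hb n⟩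
  have hconv : Tendsto (fun k => γ (φ k) • b0) atTop (𝓝 a0) := by
    have hbound (k : ℕ) : dist (γ (φ k) • b0) a0 ≤
        dist b0 (b (φ k)) + 1 / (φ k + 1) + dist (a (φ k)) a0 := by
      calc dist (γ (φ k) • b0) a0
          ≤ dist (γ (φ k) • b0) (γ (φ k) • b (φ k)) + dist (γ (φ k) • b (φ k)) (a (φ k))
              + dist (a (φ k)) a0 := dist_triangle4 _ _ _ _
        _ ≤ _ := by
          rw [(hGA.isometry _).dist_eq, dist_comm _ (a _)]
          gcongr
          exact hab _
    have hsmall : Tendsto (fun k => dist b0 (b (φ k)) + 1 / (φ k + 1 : ℝ) + dist (a (φ k)) a0)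
        atTop (𝓝 0) := by
      simpa using ((tendsto_const_nhds (x := b0).dist ((continuous_snd.tendsto _).comp hlim)).add
        (tendsto_one_div_add_atTop_nhds_zero_nat.comp hφ.tendsto_atTop)).add
        (((continuous_fst.tendsto _).comp hlim).dist (tendsto_const_nhds (x := a0)))
    exact tendsto_iff_dist_tendsto_zero.2 (squeeze_zero (fun _ => dist_nonneg) hbound hsmall)
  -- the `γ (φ k) • b0` lie in finitely many translates of `b0`, so their limit is one of them
  have hfin : (range fun k => γ (φ k) • b0).Finite := by
    refine ((hGA.proper _ (hK.union hconv.isCompact_insert_range)).image (· • b0)).subset ?_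
    rintro _ ⟨k, rfl⟩
    exact ⟨γ (φ k), ⟨_, ⟨b0, Or.inl hb0, rfl⟩, Or.inr (Or.inr ⟨k, rfl⟩)⟩, rfl⟩
  obtain ⟨k, hk⟩ := hfin.isClosed.closure_subset
    (mem_closure_of_tendsto hconv (Eventually.of_forall fun k => mem_range_self k))
  exact hγK (φ k) ⟨a0, ⟨b0, hb0, hk⟩, ha0⟩

lemma finite_closeReturns (hGA : IsGeometricAction G X) (hgeo : IsGeodesicSpace X) {K : Set X}
    (hK : IsCompact K) (hcov : ⋃ γ : G, (fun x : X => γ • x) '' K = univ) (r : ℝ) :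
    (closeReturns G K r).Finite := by
  obtain ⟨ε, hε, hfin⟩ := hGA.exists_pos_finite_closeReturns hK
  have hmul (n : ℕ) : (closeReturns G K (n * ε)).Finite := by
    induction n with
    | zero => exact hfin.subset (closeReturns_mono (by simpa using hε.le))
    | succ n ih =>
      rw [Nat.cast_succ, add_one_mul]
      exact (ih.mul hfin).subset
        (closeReturns_add_subset hGA.isometry hgeo hcov (by positivity) hε.le)
  obtain ⟨n, hn⟩ := exists_nat_ge (r / ε)
  exact (hmul n).subset (closeReturns_mono ((div_le_iff₀ hε).1 hn))

lemma properSpace (hGA : IsGeometricAction G X) (hgeo : IsGeodesicSpace X) : ProperSpace X := by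
  obtain ⟨K, hK, hcov⟩ := hGA.cocompact
  refine ⟨fun z r => ?_⟩
  obtain ⟨h₀, c₀, hc₀, rfl⟩ := iUnion_eq_univ_iff.1 hcov z
  refine ((hGA.finite_closeReturns hgeo hK hcov r).isCompact_biUnion fun u _ =>
    hK.image (hGA.isometry (h₀ * u)).continuous).of_isClosed_subset isClosed_closedBall ?_
  intro w hw
  obtain ⟨h, c, hc, rfl⟩ := iUnion_eq_univ_iff.1 hcov w
  refine mem_biUnion (x := h₀⁻¹ * h) ⟨c₀, hc₀, c, hc, ?_⟩ ⟨c, hc, by simp⟩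
  rw [← (hGA.isometry h₀).dist_eq, smul_smul, mul_inv_cancel_left]
  exact mem_closedBall'.1 hw

lemma isBounded_fixedPoints_of_finite_centralizer (hGA : IsGeometricAction G X) {g : G}
    (hZ : {h : G | g * h = h * g}.Finite) : Bornology.IsBounded {x : X | g • x = x} := by
  obtain ⟨K, hK, hcov⟩ := hGA.cocompact
  refine ((hZ.setOf_conj_mem (hGA.proper K hK)).isCompact_biUnion fun h _ =>
    hK.image (hGA.isometry h).continuous).isBounded.subset ?_
  intro x hx
  obtain ⟨h, c, hc, rfl⟩ := iUnion_eq_univ_iff.1 hcov x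
  have hfix : (h⁻¹ * g * h) • c = c := by
    rw [mul_smul, mul_smul, show g • h • c = h • c from hx, inv_smul_smul]
  exact mem_biUnion ⟨c, ⟨c, hc, hfix⟩, hc⟩ ⟨c, hc, rfl⟩

end IsGeometricAction

end IsometricAction

/-- If `G` acts geometrically on a CAT(0) space `X` and `g ∈ G`, then: if the fixed-point
set `F_g ⊆ X` is unbounded, the fixed-point set `ℱ_g ⊆ ∂X` is nonempty; consequently,
if the centralizer `Z_g` is finite then `F_g` is bounded. -/
theorem boundary_fixed_point_of_unbounded_fixed_set
    {G X : Type*} [Group G] [MetricSpace X] [MulAction G X]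
    (hGA : IsGeometricAction G X) (hCAT : IsCAT0Space X) (g : G) :
    (¬ Bornology.IsBounded {x : X | g • x = x} →
      ∀ x0 : X, ∃ α : Boundary X x0, AsymptoticMaps (fun t => g • α.1 t) α.1) ∧
    ({h : G | g * h = h * g}.Finite → Bornology.IsBounded {x : X | g • x = x}) := by
  refine ⟨fun hub x0 => ?_, hGA.isBounded_fixedPoints_of_finite_centralizer⟩
  have := hGA.properSpace hCAT.1
  have : (Bornology.cobounded X ⊓ 𝓟 {x : X | g • x = x}).NeBot :=
    ⟨fun h => hub (Bornology.isBounded_def.2 (inf_principal_eq_bot.1 h))⟩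
  set 𝒰 := Ultrafilter.of (Bornology.cobounded X ⊓ 𝓟 {x : X | g • x = x})
  have h𝒰 : ↑𝒰 ≤ Bornology.cobounded X ⊓ 𝓟 {x : X | g • x = x} := Ultrafilter.of_le _
  have hdist : Tendsto (fun x => dist x0 x) 𝒰 atTop :=
    (tendsto_dist_left_cobounded_atTop x0).mono_left (h𝒰.trans inf_le_left)
  choose f hf using hCAT.1 x0
  obtain ⟨ξ, hξ⟩ := exists_boundary_tendsto_of_geodesicFromTo 𝒰 (x := id) hdist hf
  refine ⟨ξ, dist (g • x0) x0, fun t ht => le_of_tendsto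
    ((((hGA.isometry g).continuous.tendsto _).comp (hξ t ht)).dist (hξ t ht)) ?_⟩
  filter_upwards [hdist.eventually_ge_atTop t, le_principal_iff.1 (h𝒰.trans inf_le_right)]
    with x hxt hx
  exact hCAT.dist_apply_le_of_isometry_of_fixed (hGA.isometry g) (hf x) hx ⟨ht, hxt⟩
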